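/- arXiv:math/0408201 — 2 statements merged into one kernel-verified Lean document; each statement's English description precedes it below -/
import Mathlib

section
/- Let g be a tail-relation holonomy of the one-sided m-Dyck shift Y, g : A → B. Define g̃ on p̂^{−1}(A) ∩ K₀ by keeping negative coordinates and applying g to nonnegative coordinates, where K₀ = {x ∈ X : H_i(x) ≥ 0 for all i < 0}. Then g̃ is a well-defined bijection onto p̂^{−1}(B) ∩ K₀, its image points lie in X, and (x, g̃(x)) is in the double-tail relation 𝒯₂(X) for every x. -/
open scoped BigOperators

/-- Dyck alphabet: `Sum.inl i` is the opening bracket `α i`, `Sum.inr i` the closing `β i`. -/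
abbrev DA (m : ℕ) := Fin m ⊕ Fin m

/-- Sign of a letter: `+1` for an `α`, `-1` for a `β`. -/
def daSgn {m : ℕ} : DA m → ℤ := fun w => match w with | .inl _ => 1 | .inr _ => -1

/-- The defining relations of the Dyck monoid (with zero): `α j · β j = 1`, `α i · β j = 0` (i ≠ j). -/
def dyckRel (m : ℕ) : WithZero (FreeMonoid (DA m)) → WithZero (FreeMonoid (DA m)) → Prop :=
  fun x y =>
    (∃ j : Fin m, x = ((FreeMonoid.of (Sum.inl j) * FreeMonoid.of (Sum.inr j) : FreeMonoid (DA m)) :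
        WithZero (FreeMonoid (DA m))) ∧ y = 1) ∨
    (∃ i j : Fin m, i ≠ j ∧ x = ((FreeMonoid.of (Sum.inl i) * FreeMonoid.of (Sum.inr j) : FreeMonoid (DA m)) :
        WithZero (FreeMonoid (DA m))) ∧ y = 0)

/-- The congruence on the free monoid with zero generated by the Dyck relations;
the Dyck monoid `M` is the corresponding quotient. -/
def dyckCon (m : ℕ) : Con (WithZero (FreeMonoid (DA m))) := conGen (dyckRel m)

/-- Image of a word in the free monoid with zero. -/
def wordVal {m : ℕ} (w : List (DA m)) : WithZero (FreeMonoid (DA m)) :=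
  ((FreeMonoid.ofList w : FreeMonoid (DA m)) : WithZero (FreeMonoid (DA m)))

/-- Two words are equivalent mod the Dyck monoid `M`. -/
def DyckEquiv {m : ℕ} (w w' : List (DA m)) : Prop := dyckCon m (wordVal w) (wordVal w')

/-- A word is admissible (belongs to the Dyck language): nonzero in `M`. -/
def IsNonzeroWord {m : ℕ} (w : List (DA m)) : Prop := ¬ dyckCon m (wordVal w) 0

/-- A word is balanced: equal to the identity in `M`. -/
def IsBalancedWord {m : ℕ} (w : List (DA m)) : Prop := dyckCon m (wordVal w) 1

/-- The finite subword `x_{[a,b]}` of a bi-infinite sequence. -/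
def wordOf {m : ℕ} (x : ℤ → DA m) (a b : ℤ) : List (DA m) :=
  (List.range (b + 1 - a).toNat).map (fun i => x (a + i))

/-- Membership in the two-sided `m`-Dyck shift. -/
def InDyckShift {m : ℕ} (x : ℤ → DA m) : Prop :=
  ∀ a b : ℤ, a ≤ b → IsNonzeroWord (wordOf x a b)

/-- The height cocycle generated by a sign function `s`:
`H_i = Σ_{j=0}^{i-1} s(x_j)` for `i ≥ 0`, `H_i = -Σ_{j=i}^{-1} s(x_j)` for `i < 0`. -/
def cocycle {γ : Type*} (s : γ → ℤ) (x : ℤ → γ) (i : ℤ) : ℤ :=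
  if 0 ≤ i then ∑ j ∈ Finset.range i.toNat, s (x j)
  else - ∑ j ∈ Finset.range (-i).toNat, s (x (i + j))

/-- The height cocycle `H` of the Dyck shift. -/
def Hc {m : ℕ} (x : ℤ → DA m) : ℤ → ℤ := cocycle daSgn x

/-- The double-tail (homoclinic) relation: the two sequences agree outside a finite window. -/
def DoubleTail {γ : Type*} (x y : ℤ → γ) : Prop :=
  ∃ n : ℤ, ∀ k : ℤ, n < |k| → x k = y k

/-- The cylinder set `[w]_k`. -/
def cylSet {m : ℕ} (w : List (DA m)) (k : ℤ) : Set (ℤ → DA m) :=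
  {x | ∀ i : Fin w.length, x (k + (i : ℕ)) = w.get i}

/-- One-sided finite subword `y_{[a,b]}`. -/
def wordOfN {m : ℕ} (y : ℕ → DA m) (a b : ℕ) : List (DA m) :=
  (List.range (b + 1 - a)).map (fun i => y (a + i))

/-- Membership in the one-sided `m`-Dyck shift `Y`. -/
def InDyckShiftOne {m : ℕ} (y : ℕ → DA m) : Prop :=
  ∀ a b : ℕ, a ≤ b → IsNonzeroWord (wordOfN y a b)

/-- The one-sided tail relation: the sequences agree from some coordinate on. -/
def TailRel {γ : Type*} (y y' : ℕ → γ) : Prop := ∃ n : ℕ, ∀ k : ℕ, n ≤ k → y k = y' k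

/-- `p̂`: restriction of a bi-infinite sequence to its nonnegative coordinates. -/
def phat {m : ℕ} (x : ℤ → DA m) : ℕ → DA m := fun n => x (n : ℤ)

/-- `K₀ = {x ∈ X : H_i(x) ≥ 0 for all i < 0}`. -/
def K0 {m : ℕ} : Set (ℤ → DA m) := {x | InDyckShift x ∧ ∀ i : ℤ, i < 0 → 0 ≤ Hc x i}

/-- `g̃`: keep the negative coordinates, apply `g` to the nonnegative ones. -/
def gtilde {m : ℕ} (g : (ℕ → DA m) → (ℕ → DA m)) (x : ℤ → DA m) : ℤ → DA m :=
  fun n => if n < 0 then x n else g (phat x) n.toNat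

namespace DyckAux
variable {m : ℕ}

def act : DA m → List (Fin m) → Option (List (Fin m))
  | .inl i, l => some (i :: l)
  | .inr _, [] => none
  | .inr i, j :: t => if j = i then some t else none

def runW : List (DA m) → List (Fin m) → Option (List (Fin m))
  | [], l => some l
  | a :: w, l => (act a l).bind (runW w)

lemma runW_append (u v : List (DA m)) (l : List (Fin m)) :
    runW (u ++ v) l = (runW u l).bind (runW v) := by
  induction u generalizing l with
  | nil => simp [runW]
  | cons a t ih =>
    simp only [List.cons_append, runW]
    cases act a l with
    | none => rfl
    | some s => simp [ih]

def Phi (x : WithZero (FreeMonoid (DA m))) : List (Fin m) → Option (List (Fin m)) :=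
  Option.elim x (fun _ => none) (fun w => runW (FreeMonoid.toList w))

lemma Phi_wordVal (w : List (DA m)) : Phi (wordVal w) = runW w := by
  show runW (FreeMonoid.toList (FreeMonoid.ofList w)) = runW w
  rw [FreeMonoid.toList_ofList]

lemma Phi_mul (x y : WithZero (FreeMonoid (DA m))) :
    Phi (x * y) = fun l => (Phi x l).bind (Phi y) := by
  induction x using WithZero.recZeroCoe with
  | zero => rw [zero_mul]; rfl
  | coe a =>
    induction y using WithZero.recZeroCoe with
    | zero =>
      rw [mul_zero]; funext l
      show (none : Option (List (Fin m))) = _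
      cases (Phi ((a : FreeMonoid (DA m)) : WithZero (FreeMonoid (DA m))) l) <;> rfl
    | coe b =>
      rw [← WithZero.coe_mul]
      funext l
      show runW (FreeMonoid.toList (a * b)) l = _
      rw [FreeMonoid.toList_mul, runW_append]
      rfl

lemma Phi_inv {x y : WithZero (FreeMonoid (DA m))} (h : dyckCon m x y) : Phi x = Phi y := by
  have h' : ConGen.Rel (dyckRel m) x y := h
  clear h
  induction h' with
  | of a b hab =>
    rcases hab with ⟨j, rfl, rfl⟩ | ⟨i, j, hij, rfl, rfl⟩
    · funext l
      show runW [Sum.inl j, Sum.inr j] l = runW [] l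
      simp [runW, act]
    · funext l
      show runW [Sum.inl i, Sum.inr j] l = none
      simp [runW, act, hij]
  | refl _ => rfl
  | symm _ ih => exact ih.symm
  | trans _ _ ih1 ih2 => exact ih1.trans ih2
  | mul _ _ ih1 ih2 => rw [Phi_mul, Phi_mul, ih1, ih2]

lemma nonzero_of_runW {w : List (DA m)} {l r : List (Fin m)} (h : runW w l = some r) :
    IsNonzeroWord w := by
  intro h0
  have hPhi := Phi_inv h0
  rw [Phi_wordVal] at hPhi
  have h2 : runW w l = none := by rw [hPhi]; rfl
  rw [h] at h2; exact Option.some_ne_none r h2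

variable {m : ℕ}

lemma wordVal_append (u v : List (DA m)) : wordVal (u ++ v) = wordVal u * wordVal v := rfl

lemma pair_one (j : Fin m) : dyckCon m (wordVal [Sum.inl j, Sum.inr j]) 1 :=
  ConGen.Rel.of _ _ (Or.inl ⟨j, rfl, rfl⟩)

lemma pair_zero {i j : Fin m} (hij : i ≠ j) : dyckCon m (wordVal [Sum.inl i, Sum.inr j]) 0 :=
  ConGen.Rel.of _ _ (Or.inr ⟨i, j, hij, rfl, rfl⟩)

lemma val_split (p q : List (DA m)) (a b : DA m) :
    wordVal (p ++ a :: b :: q) = wordVal p * wordVal [a, b] * wordVal q := by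
  rw [← wordVal_append, ← wordVal_append]
  congr 1
  simp

lemma reduce_equiv (p q : List (DA m)) (i : Fin m) :
    dyckCon m (wordVal (p ++ Sum.inl i :: Sum.inr i :: q)) (wordVal (p ++ q)) := by
  rw [val_split]
  have h := (dyckCon m).mul ((dyckCon m).mul ((dyckCon m).refl (wordVal p)) (pair_one i))
    ((dyckCon m).refl (wordVal q))
  rw [mul_one] at h
  rw [wordVal_append]
  exact h

lemma zero_pair_word (p q : List (DA m)) {i j : Fin m} (hij : i ≠ j) :
    dyckCon m (wordVal (p ++ Sum.inl i :: Sum.inr j :: q)) 0 := by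
  rw [val_split]
  have h := (dyckCon m).mul ((dyckCon m).mul ((dyckCon m).refl (wordVal p)) (pair_zero hij))
    ((dyckCon m).refl (wordVal q))
  rw [mul_zero, zero_mul] at h
  exact h

lemma decomp (w : List (DA m)) :
    (∃ u v : List (Fin m), w = u.map Sum.inr ++ v.map Sum.inl) ∨
    (∃ (p : List (DA m)) (i j : Fin m) (q : List (DA m)),
      w = p ++ Sum.inl i :: Sum.inr j :: q) := by
  induction w with
  | nil => exact Or.inl ⟨[], [], rfl⟩
  | cons a t ih =>
    rcases ih with ⟨u, v, rfl⟩ | ⟨p, i, j, q, rfl⟩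
    · cases a with
      | inl i =>
        cases u with
        | nil => exact Or.inl ⟨[], i :: v, rfl⟩
        | cons i' u' =>
          exact Or.inr ⟨[], i, i', u'.map Sum.inr ++ v.map Sum.inl, by simp⟩
      | inr i => exact Or.inl ⟨i :: u, v, rfl⟩
    · exact Or.inr ⟨a :: p, i, j, q, rfl⟩

lemma runW_betas (u : List (Fin m)) (l : List (Fin m)) :
    runW (u.map Sum.inr) (u ++ l) = some l := by
  induction u with
  | nil => simp [runW]
  | cons j u' ih => simpa [runW, act] using ih

lemma runW_alphas (v : List (Fin m)) (l : List (Fin m)) :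
    ∃ r, runW (v.map Sum.inl) l = some r := by
  induction v generalizing l with
  | nil => exact ⟨l, rfl⟩
  | cons i v' ih => simpa [runW, act] using ih (i :: l)

lemma runW_skip (p q : List (DA m)) (i : Fin m) (l : List (Fin m)) :
    runW (p ++ Sum.inl i :: Sum.inr i :: q) l = runW (p ++ q) l := by
  rw [runW_append, runW_append]
  have h : ∀ s, runW (Sum.inl i :: Sum.inr i :: q) s = runW q s := by
    intro s; simp [runW, act]
  cases runW p l with
  | none => rfl
  | some s => simp [h]

lemma sgn_alphas (v : List (Fin m)) : ((v.map Sum.inl).map daSgn).sum = (v.length : ℤ) := by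
  induction v with
  | nil => rfl
  | cons i v' ih =>
    simp only [List.map_cons, List.sum_cons, List.length_cons]
    rw [ih]
    simp [daSgn]
    omega

lemma runW_ex : ∀ (n : ℕ) (w : List (DA m)), w.length ≤ n → IsNonzeroWord w →
    ∃ l r, runW w l = some r := by
  intro n
  induction n with
  | zero =>
    intro w hw _
    have : w = [] := List.length_eq_zero_iff.mp (Nat.le_zero.mp hw)
    exact ⟨[], [], by simp [this, runW]⟩
  | succ n ih =>
    intro w hw hnz
    rcases decomp w with ⟨u, v, rfl⟩ | ⟨p, i, j, q, rfl⟩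
    · obtain ⟨r, hr⟩ := runW_alphas v ([] : List (Fin m))
      refine ⟨u ++ [], r, ?_⟩
      rw [runW_append, runW_betas]
      simpa using hr
    · by_cases hij : i = j
      · subst hij
        have hred := reduce_equiv p q i
        have hnz' : IsNonzeroWord (p ++ q) := fun h0 => hnz (hred.trans h0)
        have hlen : (p ++ q).length ≤ n := by
          simp only [List.length_append, List.length_cons] at hw ⊢; omega
        obtain ⟨l, r, hlr⟩ := ih _ hlen hnz'
        exact ⟨l, r, by rw [runW_skip]; exact hlr⟩
      · exact absurd (zero_pair_word p q hij) hnz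

lemma runW_neg : ∀ (n : ℕ) (w : List (DA m)), w.length ≤ n → IsNonzeroWord w →
    (∀ s, s <:+ w → ((s.map daSgn).sum ≤ 0)) →
    ∃ s, ∀ l, runW w (s ++ l) = some l := by
  intro n
  induction n with
  | zero =>
    intro w hw _ _
    have : w = [] := List.length_eq_zero_iff.mp (Nat.le_zero.mp hw)
    exact ⟨[], fun l => by simp [this, runW]⟩
  | succ n ih =>
    intro w hw hnz hsuf
    rcases decomp w with ⟨u, v, rfl⟩ | ⟨p, i, j, q, rfl⟩
    · have hv : v = [] := by
        by_contra hne
        have hsfx : v.map Sum.inl <:+ u.map Sum.inr ++ v.map Sum.inl :=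
          List.suffix_append _ _
        have h1 := hsuf _ hsfx
        rw [sgn_alphas] at h1
        have : 0 < v.length := List.length_pos_iff.mpr hne
        omega
      subst hv
      exact ⟨u, fun l => by simpa using runW_betas u l⟩
    · by_cases hij : i = j
      · subst hij
        have hred := reduce_equiv p q i
        have hnz' : IsNonzeroWord (p ++ q) := fun h0 => hnz (hred.trans h0)
        have hlen : (p ++ q).length ≤ n := by
          simp only [List.length_append, List.length_cons] at hw ⊢; omega
        have hsuf' : ∀ s, s <:+ p ++ q → ((s.map daSgn).sum ≤ 0) := by
          intro s hs
          obtain ⟨t, ht⟩ := hs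
          rcases List.append_eq_append_iff.mp ht with ⟨a, hp, hs'⟩ | ⟨c, _, hq⟩
          · subst hp; subst hs'
            have hsfx : (a ++ Sum.inl i :: Sum.inr i :: q) <:+
                ((t ++ a) ++ Sum.inl i :: Sum.inr i :: q) := ⟨t, by simp⟩
            have h2 := hsuf _ hsfx
            simp only [List.map_append, List.sum_append, List.map_cons, List.sum_cons,
              daSgn] at h2 ⊢
            omega
          · subst hq
            have hsfx : s <:+ p ++ Sum.inl i :: Sum.inr i :: (c ++ s) :=
              ⟨p ++ Sum.inl i :: Sum.inr i :: c, by simp⟩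
            exact hsuf _ hsfx
        obtain ⟨s, hs⟩ := ih _ hlen hnz' hsuf'
        exact ⟨s, fun l => by rw [runW_skip]; exact hs l⟩
      · exact absurd (zero_pair_word p q hij) hnz

variable {m : ℕ}


lemma bind_cast (l : List ℕ) :
    (Bind.bind l (fun a => Pure.pure (Nat.cast a : ℤ)) : List ℤ) = l.map (fun a : ℕ => (a : ℤ)) := by
  induction l with
  | nil => rfl
  | cons a t ih =>
    show ((a : ℤ) :: (Bind.bind t fun a => Pure.pure (Nat.cast a : ℤ)) : List ℤ) = _
    rw [ih]
    rfl

lemma wordOf_eq (x : ℤ → DA m) (a b : ℤ) :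
    wordOf x a b = (List.range (b + 1 - a).toNat).map (fun i : ℕ => x (a + (i:ℤ))) := by
  unfold wordOf
  rw [bind_cast, List.map_map]
  rfl

lemma listsum_range (f : ℕ → ℤ) (n : ℕ) :
    ((List.range n).map f).sum = ∑ j ∈ Finset.range n, f j := by
  induction n with
  | zero => simp
  | succ n ih => simp [List.range_succ, Finset.sum_range_succ, ih]

lemma wordOf_congr (x x' : ℤ → DA m) (a b : ℤ)
    (h : ∀ i : ℤ, a ≤ i → i ≤ b → x i = x' i) : wordOf x a b = wordOf x' a b := by
  rw [wordOf_eq, wordOf_eq]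
  apply List.map_congr_left
  intro i hi
  rw [List.mem_range] at hi
  exact h _ (by omega) (by omega)

lemma wordOf_split (x : ℤ → DA m) (a c b : ℤ) (h1 : a ≤ c + 1) (h2 : c ≤ b) :
    wordOf x a b = wordOf x a c ++ wordOf x (c + 1) b := by
  rw [wordOf_eq, wordOf_eq, wordOf_eq]
  have hn : (b + 1 - a).toNat = (c + 1 - a).toNat + (b + 1 - (c + 1)).toNat := by omega
  rw [hn, List.range_add, List.map_append, List.map_map]
  congr 1
  apply List.map_congr_left
  intro i hi
  simp only [Function.comp_apply]
  congr 1
  omega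

lemma wordOf_eq_wordOfN (x : ℤ → DA m) (y : ℕ → DA m)
    (h : ∀ n : ℤ, 0 ≤ n → x n = y n.toNat) (a b : ℤ) (ha : 0 ≤ a) (hab : a ≤ b) :
    wordOf x a b = wordOfN y a.toNat b.toNat := by
  rw [wordOf_eq]
  unfold wordOfN
  have hn : (b + 1 - a).toNat = b.toNat + 1 - a.toNat := by omega
  rw [hn]
  apply List.map_congr_left
  intro i hi
  rw [h (a + i) (by omega)]
  congr 1
  omega

lemma sgn_wordOf_neg (x : ℤ → DA m) (i : ℤ) (hi : i < 0) :
    (((wordOf x i (-1)).map daSgn)).sum = -(Hc x i) := by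
  rw [wordOf_eq]
  unfold Hc cocycle
  rw [if_neg (by omega : ¬ (0:ℤ) ≤ i), List.map_map, listsum_range]
  have : ((-1 : ℤ) + 1 - i).toNat = (-i).toNat := by omega
  rw [this, neg_neg]
  rfl

lemma sufsum (x : ℤ → DA m) (hH : ∀ i : ℤ, i < 0 → 0 ≤ Hc x i) (a : ℤ) (ha : a < 0) :
    ∀ s, s <:+ wordOf x a (-1) → ((s.map daSgn).sum ≤ 0) := by
  intro s hs
  obtain ⟨t, ht⟩ := hs
  have hlen : t.length + s.length = (-a).toNat := by
    have := congrArg List.length ht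
    simp only [List.length_append] at this
    rw [wordOf_eq] at this
    simp only [List.length_map, List.length_range] at this
    omega
  rcases Nat.eq_zero_or_pos s.length with h0 | hpos
  · rw [List.length_eq_zero_iff.mp h0]; simp
  · set i : ℤ := -(s.length : ℤ) with hidef
    have hi : i < 0 := by omega
    have hai : a ≤ i - 1 + 1 := by omega
    have hsplit := wordOf_split x a (i - 1) (-1) (by omega) (by omega)
    rw [sub_add_cancel] at hsplit
    have hlen2 : t.length = (wordOf x a (i-1)).length := by
      rw [wordOf_eq]
      simp only [List.length_map, List.length_range]
      omega
    have hseq : s = wordOf x i (-1) := by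
      apply List.append_inj_right (ht.trans hsplit) hlen2
    rw [hseq, sgn_wordOf_neg x i hi]
    have := hH i hi
    omega

lemma splice_K0 (x : ℤ → DA m) (y : ℕ → DA m) (hx : x ∈ K0) (hy : InDyckShiftOne y) :
    (fun n : ℤ => if n < 0 then x n else y n.toNat) ∈ K0 := by
  set z : ℤ → DA m := fun n : ℤ => if n < 0 then x n else y n.toNat with hz
  have hzneg : ∀ n : ℤ, n < 0 → z n = x n := fun n hn => if_pos hn
  have hzpos : ∀ n : ℤ, 0 ≤ n → z n = y n.toNat := fun n hn => if_neg (by omega)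
  constructor
  · intro a b hab
    rcases lt_or_ge b 0 with hb | hb
    · rw [wordOf_congr z x a b (fun i _ h2 => hzneg i (by omega))]
      exact hx.1 a b hab
    rcases lt_or_ge a 0 with ha | ha
    · have hsplit : wordOf z a b = wordOf z a (-1) ++ wordOf z 0 b :=
        (by simpa using wordOf_split z a (-1) b (by omega) (by omega))
      have h1 : wordOf z a (-1) = wordOf x a (-1) :=
        wordOf_congr z x a (-1) (fun i _ h2 => hzneg i (by omega))
      have h2 : wordOf z 0 b = wordOfN y 0 b.toNat := by
        have := wordOf_eq_wordOfN z y hzpos 0 b le_rfl hb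
        simpa using this
      have hu : IsNonzeroWord (wordOf x a (-1)) := hx.1 a (-1) (by omega)
      have hv : IsNonzeroWord (wordOfN y 0 b.toNat) := hy 0 b.toNat (Nat.zero_le _)
      obtain ⟨s, hs⟩ := runW_neg (wordOf x a (-1)).length _ le_rfl hu (sufsum x hx.2 a ha)
      obtain ⟨l, r, hlr⟩ := runW_ex (wordOfN y 0 b.toNat).length _ le_rfl hv
      have hrun : runW (wordOf x a (-1) ++ wordOfN y 0 b.toNat) (s ++ l) = some r := by
        rw [runW_append, hs l]
        exact hlr
      have := nonzero_of_runW hrun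
      rw [hsplit, h1, h2]
      exact this
    · rw [wordOf_eq_wordOfN z y hzpos a b ha hab]
      exact hy a.toNat b.toNat (by omega)
  · intro i hi
    have hHz : Hc z i = Hc x i := by
      unfold Hc cocycle
      rw [if_neg (by omega : ¬ (0:ℤ) ≤ i), if_neg (by omega : ¬ (0:ℤ) ≤ i)]
      congr 1
      apply Finset.sum_congr rfl
      intro j hj
      rw [Finset.mem_range] at hj
      congr 1
      exact hzneg _ (by omega)
    rw [hHz]
    exact hx.2 i hi

end DyckAux

open DyckAux

/-- lifting a tail holonomy `g : A → B` of the one-sided Dyck shift to the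
two-sided shift: `g̃` is a bijection of `p̂⁻¹(A) ∩ K₀` onto `p̂⁻¹(B) ∩ K₀`, its values lie in
`X`, and `(x, g̃(x)) ∈ 𝒯₂(X)` for every `x`. -/
theorem tail_holonomy_lifts (m : ℕ) (hm : 2 ≤ m)
    (A B : Set (ℕ → DA m)) (g : (ℕ → DA m) → (ℕ → DA m))
    (hA : ∀ y ∈ A, InDyckShiftOne y) (hBY : ∀ y ∈ B, InDyckShiftOne y)
    (hg : Set.BijOn g A B) (htail : ∀ y ∈ A, TailRel y (g y)) :
    Set.BijOn (gtilde g) (phat ⁻¹' A ∩ K0) (phat ⁻¹' B ∩ K0) ∧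
      ∀ x ∈ phat ⁻¹' A ∩ K0, InDyckShift (gtilde g x) ∧ DoubleTail x (gtilde g x) := by
  have hphat : ∀ x : ℤ → DA m, phat (gtilde g x) = g (phat x) := by
    intro x; funext n
    show (if (n : ℤ) < 0 then x n else g (phat x) (n : ℤ).toNat) = g (phat x) n
    rw [if_neg (by omega), Int.toNat_natCast]
  have key : ∀ x ∈ phat ⁻¹' A ∩ K0, gtilde g x ∈ phat ⁻¹' B ∩ K0 := by
    rintro x ⟨hxA, hxK⟩
    have hB : g (phat x) ∈ B := hg.mapsTo hxA
    refine ⟨?_, ?_⟩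
    · show phat (gtilde g x) ∈ B
      rw [hphat]; exact hB
    · exact splice_K0 x (g (phat x)) hxK (hBY _ hB)
  refine ⟨⟨key, ?_, ?_⟩, ?_⟩
  · -- InjOn
    rintro x ⟨hxA, hxK⟩ x' ⟨hx'A, hx'K⟩ h
    have hneg : ∀ n : ℤ, n < 0 → x n = x' n := by
      intro n hn
      have h1 := congrFun h n
      show x n = x' n
      simpa [gtilde, if_pos hn] using h1
    have hgg : g (phat x) = g (phat x') := by
      funext k
      have h1 := congrFun h (k : ℤ)
      simp only [gtilde] at h1
      rw [if_neg (by omega), if_neg (by omega), Int.toNat_natCast] at h1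
      exact h1
    have hp : phat x = phat x' := hg.injOn hxA hx'A hgg
    funext n
    rcases lt_or_ge n 0 with hn | hn
    · exact hneg n hn
    · have h2 := congrFun hp n.toNat
      simpa [phat, Int.toNat_of_nonneg hn] using h2
  · -- SurjOn
    rintro x' ⟨hx'B, hx'K⟩
    obtain ⟨y, hyA, hgy⟩ := hg.surjOn hx'B
    refine ⟨fun n : ℤ => if n < 0 then x' n else y n.toNat, ⟨?_, ?_⟩, ?_⟩
    · show phat _ ∈ A
      have : phat (fun n : ℤ => if n < 0 then x' n else y n.toNat) = y := by
        funext k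
        show (if (k : ℤ) < 0 then x' k else y (k : ℤ).toNat) = y k
        rw [if_neg (by omega), Int.toNat_natCast]
      rw [this]; exact hyA
    · exact splice_K0 x' y hx'K (hA y hyA)
    · have hpx : phat (fun n : ℤ => if n < 0 then x' n else y n.toNat) = y := by
        funext k
        show (if (k : ℤ) < 0 then x' k else y (k : ℤ).toNat) = y k
        rw [if_neg (by omega), Int.toNat_natCast]
      funext n
      rcases lt_or_ge n 0 with hn | hn
      · show (if n < 0 then (if n < 0 then x' n else y n.toNat) else _) = x' n
        rw [if_pos hn, if_pos hn]
      · show (if n < 0 then _ else g (phat _) n.toNat) = x' n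
        rw [if_neg (by omega), hpx, hgy]
        show x' ((n.toNat : ℕ) : ℤ) = x' n
        rw [Int.toNat_of_nonneg hn]
  · -- InDyckShift and DoubleTail
    intro x hx
    refine ⟨((key x hx).2).1, ?_⟩
    obtain ⟨n, hn⟩ := htail (phat x) hx.1
    refine ⟨(n : ℤ), fun k hk => ?_⟩
    rcases lt_or_ge k 0 with h | h
    · show x k = (if k < 0 then x k else _)
      rw [if_pos h]
    · have hk' : (n : ℤ) < k := by rwa [abs_of_nonneg h] at hk
      have h1 := hn k.toNat (by omega)
      show x k = (if k < 0 then x k else g (phat x) k.toNat)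
      rw [if_neg (by omega)]
      have : x ((k.toNat : ℕ) : ℤ) = g (phat x) k.toNat := h1
      rwa [Int.toNat_of_nonneg h] at this
end

section
/- The map g₊ sending x ∈ B^{+∞}_{−∞} to the sequence obtained by keeping each α_j and collapsing all β_i to a single symbol β is a bijection onto Ω^{+∞}_{−∞}, and it carries the double-tail relation of B^{+∞}_{−∞} exactly onto the double-tail relation of Ω^{+∞}_{−∞}: (g₊ × g₊)(𝒯₂(B^{+∞}_{−∞})) = 𝒯₂(Ω^{+∞}_{−∞}). -/
open scoped BigOperators

/-- The collapsed alphabet `{α_1,…,α_m, β}`. -/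
abbrev OA (m : ℕ) := Fin m ⊕ Unit

/-- Sign of a collapsed letter: `+1` for an `α`, `-1` for `β`. -/
def oSgn {m : ℕ} : OA m → ℤ := fun w => match w with | .inl _ => 1 | .inr _ => -1

/-- `g₊`: keep each `α_j`, collapse every `β_i` to the single symbol `β`. -/
def collapse {m : ℕ} (x : ℤ → DA m) : ℤ → OA m :=
  fun n => match x n with | .inl j => .inl j | .inr _ => .inr ()

/-- `B^{+∞}_{-∞} = {x ∈ X : liminf_{i→+∞} H_i(x) = +∞, liminf_{i→-∞} H_i(x) = -∞}`. -/
def Bpm (m : ℕ) : Set (ℤ → DA m) :=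
  {x | InDyckShift x ∧
    Filter.liminf (fun n : ℤ => ((Hc x n : ℝ) : EReal)) Filter.atTop = ⊤ ∧
    Filter.liminf (fun n : ℤ => ((Hc x n : ℝ) : EReal)) Filter.atBot = ⊥}

/-- `Ω^{+∞}_{-∞}`: sequences over `{α_1,…,α_m,β}` whose cocycle `Ĥ` has liminf `+∞` at `+∞`
and `-∞` at `-∞`. -/
def OmegaPm (m : ℕ) : Set (ℤ → OA m) :=
  {ω | Filter.liminf (fun n : ℤ => ((cocycle oSgn ω n : ℝ) : EReal)) Filter.atTop = ⊤ ∧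
    Filter.liminf (fun n : ℤ => ((cocycle oSgn ω n : ℝ) : EReal)) Filter.atBot = ⊥}

section Aux
variable {m : ℕ}

lemma daSgn_cases (w : DA m) : daSgn w = 1 ∨ daSgn w = -1 := by
  cases w <;> simp [daSgn]

lemma daSgn_inl_iff (w : DA m) : daSgn w = 1 ↔ ∃ c, w = .inl c := by
  cases w <;> simp [daSgn]

lemma daSgn_inr_iff (w : DA m) : daSgn w = -1 ↔ ∃ c, w = .inr c := by
  cases w <;> simp [daSgn]

/-- Step relation for cocycles. -/
lemma cocycle_step {γ : Type*} (s : γ → ℤ) (x : ℤ → γ) (t : ℤ) :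
    cocycle s x (t + 1) = cocycle s x t + s (x t) := by
  rcases le_or_gt 0 t with h | h
  · have h1 : (0:ℤ) ≤ t + 1 := by omega
    have ht : ((t + 1).toNat) = t.toNat + 1 := by omega
    simp only [cocycle, if_pos h, if_pos h1, ht, Finset.sum_range_succ]
    have h2 : ((t.toNat : ℤ)) = t := by omega
    rw [h2]
  · rcases eq_or_lt_of_le (by omega : t + 1 ≤ 0) with h0 | h0
    · have ht : t = -1 := by omega
      subst ht
      simp [cocycle, Finset.sum_range_succ]
    · have h1 : ¬ (0:ℤ) ≤ t + 1 := by omega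
      have h2 : ¬ (0:ℤ) ≤ t := by omega
      have ht : (-t).toNat = (-(t+1)).toNat + 1 := by omega
      simp only [cocycle, if_neg h1, if_neg h2, ht]
      rw [Finset.sum_range_succ']
      have h3 : ∀ j : ℕ, x (t + (↑(j + 1))) = x (t + 1 + ↑j) := by
        intro j; congr 1; push_cast; ring
      simp only [h3]
      push_cast
      ring_nf

/-- Interval sum formula for cocycles. -/
lemma cocycle_sub {γ : Type*} (s : γ → ℤ) (x : ℤ → γ) {a b : ℤ} (hab : a ≤ b) :
    cocycle s x b = cocycle s x a + ∑ t ∈ Finset.Ico a b, s (x t) := by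
  obtain ⟨n, rfl⟩ : ∃ n : ℕ, b = a + n := ⟨(b - a).toNat, by omega⟩
  clear hab
  induction n with
  | zero => simp
  | succ n ih =>
    have h1 : a + (↑(n+1)) = (a + n) + 1 := by push_cast; ring
    rw [h1, cocycle_step, ih]
    have hIco : Finset.Ico a (a + ↑n + 1) = insert (a + ↑n) (Finset.Ico a (a + ↑n)) := by
      ext t
      simp only [Finset.mem_Ico, Finset.mem_insert]
      omega
    rw [hIco, Finset.sum_insert (by simp)]
    ring

/-- If a `ℤ`-indexed path with upward steps `≤ 1` starts `≤ V` and ends `> V`,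
it crosses `V` with everything after the crossing staying above `V`. -/
lemma exists_crossing (f : ℤ → ℤ) (hstep : ∀ t, f (t + 1) ≤ f t + 1) (a b V : ℤ)
    (hab : a ≤ b) (ha : f a ≤ V) (hb : V < f b) :
    ∃ p, a ≤ p ∧ p < b ∧ f p = V ∧ ∀ q, p < q → q ≤ b → V < f q := by
  obtain ⟨p, ⟨⟨hpa, hpb⟩, hpV⟩, hmax⟩ :=
    Int.exists_greatest_of_bdd (P := fun t => (a ≤ t ∧ t ≤ b) ∧ f t ≤ V)
      ⟨b, fun z hz => hz.1.2⟩ ⟨a, ⟨le_refl a, hab⟩, ha⟩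
  have hpb' : p < b := lt_of_le_of_ne hpb (by rintro rfl; omega)
  have habove : ∀ q, p < q → q ≤ b → V < f q := by
    intro q hq1 hq2
    by_contra hc
    exact absurd (hmax q ⟨⟨by omega, hq2⟩, by omega⟩) (by omega)
  have h1 : V < f (p + 1) := habove (p + 1) (by omega) (by omega)
  have h2 := hstep p
  refine ⟨p, hpa, hpb', by omega, habove⟩

end Aux

section Model
variable {m : ℕ}

/-- Stacks over `Fin m`. -/
abbrev Stk (m : ℕ) := List (Fin m)

/-- One-letter action on stacks: `α j` pushes `j`, `β j` pops `j`. -/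
def evalL {m : ℕ} : DA m → Stk m → Option (Stk m)
  | .inl j, s => some (j :: s)
  | .inr j, s =>
    match s with
    | [] => none
    | k :: s' => if k = j then some s' else none

/-- Action of a word on stacks. -/
def evalW {m : ℕ} : List (DA m) → Stk m → Option (Stk m)
  | [], s => some s
  | a :: w, s => (evalL a s).bind (evalW w)

lemma evalW_append (u v : List (DA m)) (s : Stk m) :
    evalW (u ++ v) s = (evalW u s).bind (evalW v) := by
  induction u generalizing s with
  | nil => simp [evalW]
  | cons a u ih =>
    simp only [List.cons_append, evalW]
    cases evalL a s with
    | none => simp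
    | some t => simp [ih]

lemma evalW_pair (j : Fin m) (s : Stk m) : evalW [.inl j, .inr j] s = some s := by
  simp [evalW, evalL]

lemma evalW_pair_ne {i j : Fin m} (h : i ≠ j) (s : Stk m) :
    evalW [.inl i, .inr j] s = none := by
  simp [evalW, evalL, h]

open scoped Classical in
noncomputable def sem {m : ℕ} (z : WithZero (FreeMonoid (DA m))) : Stk m → Option (Stk m) :=
  if h : z = 0 then fun _ => none else evalW (FreeMonoid.toList (WithZero.unzero h))

open scoped Classical in
lemma sem_zero : sem (0 : WithZero (FreeMonoid (DA m))) = fun _ => none := by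
  simp [sem]

open scoped Classical in
lemma sem_coe (g : FreeMonoid (DA m)) :
    sem (g : WithZero (FreeMonoid (DA m))) = evalW (FreeMonoid.toList g) := by
  rw [sem, dif_neg (WithZero.coe_ne_zero)]
  congr 1

lemma sem_one : sem (1 : WithZero (FreeMonoid (DA m))) = fun s => some s := by
  have h : ((1 : FreeMonoid (DA m)) : WithZero (FreeMonoid (DA m))) = 1 := WithZero.coe_one
  rw [← h, sem_coe]
  rfl

lemma sem_mul (a b : WithZero (FreeMonoid (DA m))) (s : Stk m) :
    sem (a * b) s = (sem a s).bind (sem b) := by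
  rcases eq_or_ne a 0 with rfl | ha
  · simp [sem_zero]
  rcases eq_or_ne b 0 with rfl | hb
  · rw [mul_zero]
    simp only [sem_zero]
    cases h : sem a s <;> simp
  obtain ⟨ga, rfl⟩ := WithZero.ne_zero_iff_exists.mp ha
  obtain ⟨gb, rfl⟩ := WithZero.ne_zero_iff_exists.mp hb
  rw [← WithZero.coe_mul, sem_coe, sem_coe, sem_coe]
  have : FreeMonoid.toList (ga * gb) = FreeMonoid.toList ga ++ FreeMonoid.toList gb := rfl
  rw [this, evalW_append]

lemma sem_eq_of_con {a b : WithZero (FreeMonoid (DA m))} (h : dyckCon m a b) :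
    sem a = sem b := by
  induction h with
  | of u v huv =>
    rcases huv with ⟨j, rfl, rfl⟩ | ⟨i, j, hij, rfl, rfl⟩
    · funext s
      rw [sem_coe, sem_one]
      exact evalW_pair j s
    · funext s
      rw [sem_coe, sem_zero]
      exact evalW_pair_ne hij s
  | refl a => rfl
  | symm _ ih => exact ih.symm
  | trans _ _ ih1 ih2 => exact ih1.trans ih2
  | mul _ _ ih1 ih2 =>
    funext s
    rw [sem_mul, sem_mul, ih1, ih2]

lemma sem_wordVal (w : List (DA m)) : sem (wordVal w) = evalW w := by
  rw [wordVal, sem_coe, FreeMonoid.toList_ofList]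

/-- Words that act on some stack. -/
def GoodW {m : ℕ} (w : List (DA m)) : Prop := ∃ s s' : Stk m, evalW w s = some s'

lemma isNonzero_of_good {w : List (DA m)} (h : GoodW w) : IsNonzeroWord w := by
  intro hcon
  obtain ⟨s, s', hs⟩ := h
  have := sem_eq_of_con hcon
  rw [sem_wordVal, sem_zero] at this
  rw [congrFun this s] at hs
  cases hs

lemma isNonzeroWord_nil : IsNonzeroWord ([] : List (DA m)) :=
  isNonzero_of_good ⟨[], [], rfl⟩

end Model

section ConLemmas
variable {m : ℕ}

lemma wordVal_append (u v : List (DA m)) : wordVal (u ++ v) = wordVal u * wordVal v := by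
  have h : FreeMonoid.ofList (u ++ v) = FreeMonoid.ofList u * FreeMonoid.ofList v := rfl
  rw [wordVal, h, WithZero.coe_mul]
  rfl

lemma wordVal_nil : wordVal ([] : List (DA m)) = 1 := rfl

lemma con_pair (j : Fin m) : dyckCon m (wordVal [.inl j, .inr j]) 1 :=
  ConGen.Rel.of _ _ (Or.inl ⟨j, rfl, rfl⟩)

lemma con_pair_ne {i j : Fin m} (h : i ≠ j) : dyckCon m (wordVal [.inl i, .inr j]) 0 :=
  ConGen.Rel.of _ _ (Or.inr ⟨i, j, h, rfl, rfl⟩)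

lemma con_sandwich {a b : WithZero (FreeMonoid (DA m))} (c d : WithZero (FreeMonoid (DA m)))
    (h : dyckCon m a b) : dyckCon m (c * a * d) (c * b * d) :=
  (dyckCon m).mul ((dyckCon m).mul ((dyckCon m).refl c) h) ((dyckCon m).refl d)

lemma con_mid (t s : List (DA m)) {z : WithZero (FreeMonoid (DA m))} {c j : Fin m}
    (h : dyckCon m (wordVal [.inl c, .inr j]) z) :
    dyckCon m (wordVal (t ++ .inl c :: .inr j :: s)) (wordVal t * z * wordVal s) := by
  have e : t ++ .inl c :: .inr j :: s = t ++ ([.inl c, .inr j] ++ s) := rfl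
  rw [e, wordVal_append, wordVal_append, ← mul_assoc]
  exact con_sandwich _ _ h

lemma first_inr (w : List (DA m)) :
    (∀ u ∈ w, ∃ c, u = Sum.inl c) ∨
      ∃ t j s, w = t ++ .inr j :: s ∧ ∀ u ∈ t, ∃ c, u = Sum.inl c := by
  induction w with
  | nil => exact Or.inl (by simp)
  | cons a w ih =>
    cases a with
    | inr j => exact Or.inr ⟨[], j, w, rfl, by simp⟩
    | inl c =>
      rcases ih with h | ⟨t, j, s, rfl, ht⟩
      · refine Or.inl ?_
        intro u hu
        rcases List.mem_cons.mp hu with rfl | hu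
        · exact ⟨c, rfl⟩
        · exact h u hu
      · refine Or.inr ⟨.inl c :: t, j, s, rfl, ?_⟩
        intro u hu
        rcases List.mem_cons.mp hu with rfl | hu
        · exact ⟨c, rfl⟩
        · exact ht u hu

lemma sum_map_all_inl {w : List (DA m)} (h : ∀ u ∈ w, ∃ c, u = Sum.inl c) :
    (w.map daSgn).sum = w.length := by
  induction w with
  | nil => simp
  | cons a w ih =>
    obtain ⟨c, rfl⟩ := h a (by simp)
    simp only [List.map_cons, List.sum_cons, List.length_cons]
    rw [ih (fun u hu => h u (by simp [hu]))]
    simp [daSgn]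
    ring

/-- A word with nonnegative height profile, zero total height, which is nonzero in the
Dyck monoid, is balanced. -/
lemma balanced_of_profile : ∀ (n : ℕ) (w : List (DA m)), w.length ≤ n →
    (∀ k, k ≤ w.length → 0 ≤ ((w.take k).map daSgn).sum) →
    (w.map daSgn).sum = 0 → IsNonzeroWord w → IsBalancedWord w := by
  intro n
  induction n with
  | zero =>
    intro w hw _ _ _
    have : w = [] := List.length_eq_zero_iff.mp (by omega)
    subst this
    exact (dyckCon m).refl 1
  | succ n ih =>
    intro w hw h1 h2 h3
    rcases first_inr w with hall | ⟨t, j, s, rfl, ht⟩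
    · have := sum_map_all_inl hall
      have : w = [] := List.length_eq_zero_iff.mp (by omega)
      subst this
      exact (dyckCon m).refl 1
    · rcases List.eq_nil_or_concat t with rfl | ⟨t', a, rfl⟩
      · exfalso
        have := h1 1 (by simp)
        simp [daSgn] at this
      obtain ⟨c, rfl⟩ := ht a (by simp)
      -- w = t' ++ [inl c] ++ inr j :: s = t' ++ inl c :: inr j :: s
      have hw' : t'.concat (Sum.inl c) ++ Sum.inr j :: s = t' ++ .inl c :: .inr j :: s := by
        simp
      rw [hw'] at h1 h2 h3 hw ⊢
      set A := t'.length with hA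
      -- c = j
      have hcj : c = j := by
        by_contra hne
        apply h3
        have h0 : dyckCon m (wordVal (t' ++ .inl c :: .inr j :: s)) (wordVal t' * 0 * wordVal s) :=
          con_mid t' s (con_pair_ne hne)
        simpa using h0
      subst hcj
      have hcon : dyckCon m (wordVal (t' ++ .inl c :: .inr c :: s)) (wordVal (t' ++ s)) := by
        have h0 : dyckCon m (wordVal (t' ++ .inl c :: .inr c :: s)) (wordVal t' * 1 * wordVal s) :=
          con_mid t' s (con_pair c)
        rw [mul_one, ← wordVal_append] at h0
        exact h0
      have hlen : (t' ++ s).length ≤ n := by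
        simp only [List.length_append, List.length_cons] at hw ⊢
        omega
      have h1' : ∀ k, k ≤ (t' ++ s).length → 0 ≤ (((t' ++ s).take k).map daSgn).sum := by
        intro k hk
        rcases le_or_gt k A with hkA | hkA
        · have e1 : (t' ++ s).take k = t'.take k := by
            rw [List.take_append]
            have : k - t'.length = 0 := by omega
            simp [this]
          have e2 : (t' ++ .inl c :: .inr c :: s).take k = t'.take k := by
            rw [List.take_append]
            have : k - t'.length = 0 := by omega
            simp [this]
          rw [e1, ← e2]
          exact h1 k (by simp only [List.length_append, List.length_cons] at hk ⊢; omega)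
        · have e1 : (t' ++ s).take k = t' ++ s.take (k - A) := by
            rw [List.take_append, List.take_of_length_le (by omega)]
          have e2 : (t' ++ .inl c :: .inr c :: s).take (k + 2) =
              t' ++ .inl c :: .inr c :: s.take (k - A) := by
            rw [List.take_append, List.take_of_length_le (by omega)]
            congr 1
            have : k + 2 - A = (k - A) + 2 := by omega
            rw [this]
            rfl
          have := h1 (k + 2) (by simp only [List.length_append, List.length_cons] at hk ⊢; omega)
          rw [e2] at this
          rw [e1]
          simp only [List.map_append, List.sum_append, List.map_cons, List.sum_cons, daSgn] at this ⊢
          omega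
      have h2' : ((t' ++ s).map daSgn).sum = 0 := by
        simp only [List.map_append, List.sum_append, List.map_cons, List.sum_cons, daSgn] at h2 ⊢
        omega
      have h3' : IsNonzeroWord (t' ++ s) := fun h0 => h3 (hcon.trans h0)
      exact hcon.trans (ih (t' ++ s) hlen h1' h2' h3')

section MatchSec
variable {m : ℕ}

/-- `p` is the matching position for the closing bracket at `k`. -/
def MatchF (f : ℤ → ℤ) (p k : ℤ) : Prop :=
  p < k ∧ f p = f (k + 1) ∧ ∀ q, p < q → q ≤ k → f q ≠ f (k + 1)

lemma matchF_unique {f : ℤ → ℤ} {p₁ p₂ k : ℤ} (h1 : MatchF f p₁ k) (h2 : MatchF f p₂ k) :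
    p₁ = p₂ := by
  by_contra hne
  rcases lt_or_gt_of_ne hne with h | h
  · exact h1.2.2 p₂ h h2.1.le h2.2.1
  · exact h2.2.2 p₁ h h1.1.le h1.2.1

lemma matchF_unique' {f : ℤ → ℤ} {p k₁ k₂ : ℤ} (h1 : MatchF f p k₁) (h2 : MatchF f p k₂) :
    k₁ = k₂ := by
  by_contra hne
  rcases lt_or_gt_of_ne hne with h | h
  · exact h2.2.2 (k₁ + 1) (by have := h1.1; omega) (by omega) (h1.2.1 ▸ h2.2.1.symm ▸ rfl)
  · exact h1.2.2 (k₂ + 1) (by have := h2.1; omega) (by omega) (h2.2.1 ▸ h1.2.1.symm ▸ rfl)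

lemma Hc_step (x : ℤ → DA m) (t : ℤ) : Hc x (t + 1) = Hc x t + daSgn (x t) :=
  cocycle_step daSgn x t

lemma Hc_up (x : ℤ → DA m) (t : ℤ) : Hc x (t + 1) ≤ Hc x t + 1 := by
  rw [Hc_step]; rcases daSgn_cases (x t) with h | h <;> omega

lemma Hc_down (x : ℤ → DA m) (t : ℤ) : Hc x t - 1 ≤ Hc x (t + 1) := by
  rw [Hc_step]; rcases daSgn_cases (x t) with h | h <;> omega

lemma Hc_step_inr {x : ℤ → DA m} {k : ℤ} {j : Fin m} (h : x k = .inr j) :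
    Hc x (k + 1) = Hc x k - 1 := by
  rw [Hc_step, h]; simp [daSgn]; omega

lemma Hc_step_inl {x : ℤ → DA m} {k : ℤ} {j : Fin m} (h : x k = .inl j) :
    Hc x (k + 1) = Hc x k + 1 := by
  rw [Hc_step, h]; simp [daSgn]

lemma match_inl {x : ℤ → DA m} {p k : ℤ} {j : Fin m} (hk : x k = .inr j)
    (h : MatchF (Hc x) p k) : ∃ c, x p = .inl c := by
  have hV : Hc x (k + 1) = Hc x k - 1 := Hc_step_inr hk
  rw [← daSgn_inl_iff]
  have hs := Hc_step x p
  rcases daSgn_cases (x p) with h1 | h1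
  · exact h1
  exfalso
  have h21 := h.2.1
  have h11 := h.1
  have hne : Hc x (p + 1) = Hc x (k + 1) - 1 := by omega
  obtain ⟨q, hq1, hq2, hq3, _⟩ := exists_crossing (Hc x) (Hc_up x) (p + 1) k (Hc x (k + 1))
    (by omega) (by omega) (by omega)
  exact h.2.2 q (by omega) (by omega) hq3

lemma match_inr {x : ℤ → DA m} {p k : ℤ} {c : Fin m} (hp : x p = .inl c)
    (h : MatchF (Hc x) p k) : ∃ j, x k = .inr j := by
  have hp1 : Hc x (p + 1) = Hc x p + 1 := Hc_step_inl hp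
  rw [← daSgn_inr_iff]
  have hs := Hc_step x k
  rcases daSgn_cases (x k) with h1 | h1
  swap
  · exact h1
  exfalso
  have h21 := h.2.1
  have h11 := h.1
  have hkV : Hc x k = Hc x (k + 1) - 1 := by omega
  obtain ⟨q, hq1, hq2, hq3, _⟩ := exists_crossing (fun t => - Hc x t)
    (by intro t; show - Hc x (t + 1) ≤ - Hc x t + 1; have := Hc_down x t; omega)
    (p + 1) k (- Hc x (k + 1))
    (by omega) (by show - Hc x (p + 1) ≤ - Hc x (k + 1); omega)
    (by show - Hc x (k + 1) < - Hc x k; omega)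
  have hq3' : Hc x q = Hc x (k + 1) := by
    have : - Hc x q = - Hc x (k + 1) := hq3
    omega
  exact h.2.2 q (by omega) (by omega) hq3'

/-- Every closing bracket has a matching opening bracket with the same index. -/
def MatchedSeq (x : ℤ → DA m) : Prop :=
  ∀ k (j : Fin m), x k = .inr j → ∃ p, MatchF (Hc x) p k ∧ x p = .inl j

end MatchSec

section PosList

/-- The list of integers `a, a+1, …, a+n-1`. -/
def posList (a : ℤ) : ℕ → List ℤ
  | 0 => []
  | n + 1 => a :: posList (a + 1) n

lemma posList_snoc : ∀ (n : ℕ) (a : ℤ), posList a (n + 1) = posList a n ++ [a + n] := by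
  intro n
  induction n with
  | zero => intro a; simp [posList]
  | succ n ih =>
    intro a
    have h1 : posList a (n + 2) = a :: posList (a + 1) (n + 1) := rfl
    rw [h1, ih (a + 1)]
    have h2 : posList a (n + 1) = a :: posList (a + 1) n := rfl
    rw [h2]
    simp only [List.cons_append]
    congr 2
    push_cast
    ring

lemma posList_eq : ∀ (n : ℕ) (a : ℤ), posList a n = (List.range n).map (fun i : ℕ => a + (i : ℤ)) := by
  intro n
  induction n with
  | zero => intro a; rfl
  | succ n ih =>
    intro a
    rw [posList_snoc, List.range_succ, List.map_append, ih a]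
    rfl

lemma posList_map {γ : Type*} (x : ℤ → γ) (n : ℕ) (a : ℤ) :
    (posList a n).map x = (List.range n).map (fun i : ℕ => x (a + (i : ℤ))) := by
  rw [posList_eq, List.map_map]
  rfl

lemma wordOf_eq {m : ℕ} (x : ℤ → DA m) (a b : ℤ) :
    wordOf x a b = (posList a (b + 1 - a).toNat).map x := by
  rw [posList_map x _ a]
  simp [wordOf, ← List.map_eq_flatMap]

lemma posList_length : ∀ (n : ℕ) (a : ℤ), (posList a n).length = n := by
  intro n
  induction n with
  | zero => intro a; rfl
  | succ n ih => intro a; simp [posList, ih]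

lemma mem_posList : ∀ (n : ℕ) (a t : ℤ), t ∈ posList a n ↔ a ≤ t ∧ t < a + n := by
  intro n
  induction n with
  | zero => intro a t; simp [posList]
  | succ n ih =>
    intro a t
    simp only [posList, List.mem_cons, ih (a + 1)]
    push_cast
    constructor
    · rintro (rfl | h)
      · omega
      · omega
    · intro h
      rcases eq_or_ne t a with rfl | hne
      · exact Or.inl rfl
      · exact Or.inr (by omega)

lemma take_posList : ∀ (n k : ℕ) (a : ℤ), (posList a n).take k = posList a (min k n) := by
  intro n
  induction n with
  | zero => intro k a; simp [posList]
  | succ n ih =>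
    intro k a
    cases k with
    | zero => simp [posList]
    | succ k =>
      have : min (k + 1) (n + 1) = min k n + 1 := by omega
      rw [this]
      simp only [posList, List.take_succ_cons, ih k (a + 1)]

lemma posList_head? : ∀ (n : ℕ) (a : ℤ), 0 < n → (posList a n).head? = some a := by
  intro n a h
  cases n with
  | zero => omega
  | succ n => rfl

lemma posList_chain' (r : ℤ → ℤ → Prop) (hr : ∀ t, r t (t + 1)) :
    ∀ (n : ℕ) (a : ℤ), List.Chain' r (posList a n) := by
  intro n
  induction n with
  | zero => intro a; exact List.isChain_nil
  | succ n ih =>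
    intro a
    unfold List.Chain'
    rw [show posList a (n + 1) = a :: posList (a + 1) n from rfl, List.isChain_cons]
    refine ⟨?_, ih (a + 1)⟩
    intro y hy
    cases n with
    | zero => simp [posList] at hy
    | succ n =>
      rw [posList_head? (n + 1) (a + 1) (by omega)] at hy
      simp only [Option.mem_def, Option.some.injEq] at hy
      rw [← hy]
      exact hr a

lemma sum_posList {m : ℕ} (x : ℤ → DA m) :
    ∀ (n : ℕ) (a : ℤ), ((posList a n).map (fun t => daSgn (x t))).sum = Hc x (a + n) - Hc x a := by
  intro n
  induction n with
  | zero => intro a; simp [posList]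
  | succ n ih =>
    intro a
    rw [posList_snoc]
    simp only [List.map_append, List.sum_append, ih a, List.map_cons, List.sum_cons,
      List.map_nil, List.sum_nil]
    have h1 : a + ↑(n + 1) = (a + ↑n) + 1 := by push_cast; ring
    rw [h1, Hc_step]
    ring

end PosList

section Liminf
open Filter

lemma exists_forall_gt_of_liminf_top {g : ℤ → ℤ}
    (h : liminf (fun n : ℤ => ((g n : ℝ) : EReal)) atTop = ⊤) (C : ℤ) :
    ∃ N : ℤ, ∀ t, N ≤ t → C < g t := by
  have h1 : ((C : ℝ) : EReal) < liminf (fun n : ℤ => ((g n : ℝ) : EReal)) atTop := by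
    rw [h]; exact EReal.coe_lt_top _
  have h2 := Filter.eventually_lt_of_lt_liminf h1
  rw [Filter.eventually_atTop] at h2
  obtain ⟨N, hN⟩ := h2
  refine ⟨N, fun t ht => ?_⟩
  have := hN t ht
  exact_mod_cast this

lemma exists_le_of_liminf_bot {g : ℤ → ℤ}
    (h : liminf (fun n : ℤ => ((g n : ℝ) : EReal)) atBot = ⊥) (C k : ℤ) :
    ∃ p, p ≤ k ∧ g p < C := by
  have h1 : liminf (fun n : ℤ => ((g n : ℝ) : EReal)) atBot < ((C : ℝ) : EReal) := by
    rw [h]; exact EReal.bot_lt_coe _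
  have h2 := Filter.frequently_lt_of_liminf_lt (by isBoundedDefault) h1
  rw [Filter.frequently_atBot] at h2
  obtain ⟨p, hp, hp2⟩ := h2 k
  exact ⟨p, hp, by exact_mod_cast hp2⟩

end Liminf

section Matched
variable {m : ℕ}

lemma matched_of_mem {x : ℤ → DA m} (hx : x ∈ Bpm m) : MatchedSeq x := by
  obtain ⟨hdyck, htop, hbot⟩ := hx
  intro k j hkj
  have hV : Hc x (k + 1) = Hc x k - 1 := Hc_step_inr hkj
  obtain ⟨p', hp'k, hp'⟩ := exists_le_of_liminf_bot hbot (Hc x (k + 1)) k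
  obtain ⟨p, hpa, hpk, hpV, habove⟩ := exists_crossing (Hc x) (Hc_up x) p' k (Hc x (k + 1))
    hp'k (le_of_lt hp') (by omega)
  have hmatch : MatchF (Hc x) p k := ⟨hpk, hpV, fun q h1 h2 => (habove q h1 h2).ne'⟩
  obtain ⟨c, hpc⟩ := match_inl hkj hmatch
  have hp1 : Hc x (p + 1) = Hc x p + 1 := Hc_step_inl hpc
  set n := (k - p - 1).toNat with hn
  have hk1 : (k + 1 - p).toNat = n + 2 := by omega
  have hdecomp : wordOf x p k = Sum.inl c :: ((posList (p + 1) n).map x ++ [Sum.inr j]) := by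
    rw [wordOf_eq, hk1]
    have h1 : posList p (n + 2) = p :: posList (p + 1) (n + 1) := rfl
    rw [h1, posList_snoc]
    have h2 : p + 1 + (n : ℤ) = k := by omega
    rw [h2]
    simp [hkj, hpc]
  set u := (posList (p + 1) n).map x with hu
  have hulen : u.length = n := by rw [hu, List.length_map, posList_length]
  have hupper : ∀ s : ℕ, s ≤ n → Hc x (p + 1) ≤ Hc x (p + 1 + s) := by
    intro s hs
    have h3 := habove (p + 1 + s) (by omega) (by omega)
    omega
  have hbal : IsBalancedWord u := by
    apply balanced_of_profile n u (le_of_eq hulen)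
    · intro s hs
      rw [hu, ← List.map_take, take_posList]
      have hmin : min s n = s := by rw [hulen] at hs; omega
      rw [hmin, List.map_map]
      have h4 := sum_posList x s (p + 1)
      rw [show (daSgn ∘ x) = (fun t => daSgn (x t)) from rfl, h4]
      have := hupper s (by rw [hulen] at hs; omega)
      omega
    · rw [hu, List.map_map]
      have h4 := sum_posList x n (p + 1)
      rw [show (daSgn ∘ x) = (fun t => daSgn (x t)) from rfl, h4]
      have h5 : p + 1 + (n : ℤ) = k := by omega
      rw [h5]
      omega
    · rcases Nat.eq_zero_or_pos n with h0 | h0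
      · rw [hu, h0]
        exact isNonzeroWord_nil
      · have he : u = wordOf x (p + 1) (k - 1) := by
          have hnn : ((k - 1) + 1 - (p + 1)).toNat = n := by omega
          rw [hu, wordOf_eq, hnn]
        rw [he]
        exact hdyck (p + 1) (k - 1) (by omega)
  have hcj : c = j := by
    by_contra hne
    apply hdyck p k (le_of_lt hpk)
    have hval : wordVal (wordOf x p k) = wordVal [Sum.inl c] * wordVal u * wordVal [Sum.inr j] := by
      rw [hdecomp,
        show Sum.inl c :: (u ++ [Sum.inr j]) = ([Sum.inl c] ++ u) ++ [Sum.inr j] from by simp,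
        wordVal_append, wordVal_append]
    have h1 : dyckCon m (wordVal (wordOf x p k))
        (wordVal [Sum.inl c] * 1 * wordVal [Sum.inr j]) := by
      rw [hval]; exact con_sandwich _ _ hbal
    have h2 : wordVal [Sum.inl c] * 1 * wordVal [Sum.inr j] = wordVal [Sum.inl c, Sum.inr j] := by
      rw [mul_one, ← wordVal_append]
      rfl
    have h3 : dyckCon m (wordVal [Sum.inl c, Sum.inr j]) 0 := con_pair_ne hne
    exact h1.trans (h2 ▸ h3)
  exact ⟨p, hmatch, hcj ▸ hpc⟩

end Matched

section Key
variable {m : ℕ}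

lemma find_pair {α : Type*} (P Q : α → Prop) (L : List α) :
    (∃ L₁ a b L₂, L = L₁ ++ a :: b :: L₂ ∧ P a ∧ Q b) ∨
      L.Chain' (fun u v => ¬(P u ∧ Q v)) := by
  induction L with
  | nil => exact Or.inr List.isChain_nil
  | cons a t ih =>
    cases t with
    | nil => exact Or.inr (List.isChain_singleton a)
    | cons b t' =>
      by_cases h : P a ∧ Q b
      · exact Or.inl ⟨[], a, b, t', rfl, h.1, h.2⟩
      · rcases ih with ⟨L₁, u, v, L₂, he, hP, hQ⟩ | hch
        · exact Or.inl ⟨a :: L₁, u, v, L₂, by rw [he]; rfl, hP, hQ⟩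
        · exact Or.inr (List.isChain_cons_cons.mpr ⟨h, hch⟩)

lemma shape (w : List (DA m))
    (h : w.Chain' (fun u v => ¬((∃ c, u = Sum.inl c) ∧ (∃ c, v = Sum.inr c)))) :
    ∃ js ks : List (Fin m), w = js.map Sum.inr ++ ks.map Sum.inl := by
  induction w with
  | nil => exact ⟨[], [], rfl⟩
  | cons a t ih =>
    obtain ⟨js, ks, he⟩ := ih h.tail
    cases a with
    | inr j => exact ⟨j :: js, ks, by rw [he]; rfl⟩
    | inl c =>
      cases js with
      | nil => exact ⟨[], c :: ks, by rw [he]; rfl⟩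
      | cons j js' =>
        exfalso
        have hh := (List.isChain_cons.mp h).1
        have hmem : (Sum.inr j : DA m) ∈ t.head? := by rw [he]; rfl
        exact hh _ hmem ⟨⟨c, rfl⟩, ⟨j, rfl⟩⟩

lemma evalW_inrs (js : List (Fin m)) (s : Stk m) :
    evalW (js.map Sum.inr) (js ++ s) = some s := by
  induction js with
  | nil => rfl
  | cons j js ih => simp [evalW, evalL, ih]

lemma evalW_inls (ks : List (Fin m)) : ∀ s : Stk m, ∃ s', evalW (ks.map Sum.inl) s = some s' := by
  induction ks with
  | nil => exact fun s => ⟨s, rfl⟩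
  | cons k ks ih =>
    intro s
    obtain ⟨s', hs'⟩ := ih (k :: s)
    exact ⟨s', by simp [evalW, evalL, hs']⟩

lemma good_shape (js ks : List (Fin m)) : GoodW (js.map Sum.inr ++ ks.map Sum.inl) := by
  obtain ⟨s', hs'⟩ := evalW_inls ks []
  refine ⟨js ++ [], s', ?_⟩
  rw [evalW_append, evalW_inrs]
  simpa using hs'

lemma good_cancel {u v : List (DA m)} (j : Fin m) (h : GoodW (u ++ v)) :
    GoodW (u ++ [Sum.inl j, Sum.inr j] ++ v) := by
  obtain ⟨s, s', hs⟩ := h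
  refine ⟨s, s', ?_⟩
  rw [evalW_append] at hs
  rw [evalW_append, evalW_append]
  cases he : evalW u s with
  | none => rw [he] at hs; simp at hs
  | some t =>
    rw [he] at hs
    simp only [Option.bind_some] at hs
    simp [evalW_pair j t, hs]

open scoped Classical in
/-- The (unique) matching opening position of a closing bracket. -/
noncomputable def mpos {m : ℕ} (x : ℤ → DA m) (k : ℤ) : ℤ :=
  if h : ∃ p, MatchF (Hc x) p k then h.choose else 0

open scoped Classical in
/-- The (unique) closing position matched to an opening bracket. -/
noncomputable def qpos {m : ℕ} (x : ℤ → DA m) (t : ℤ) : ℤ :=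
  if h : ∃ q, MatchF (Hc x) t q then h.choose else 0

open scoped Classical in
lemma mpos_spec {x : ℤ → DA m} {p k : ℤ} (h : MatchF (Hc x) p k) : mpos x k = p := by
  rw [mpos, dif_pos ⟨p, h⟩]
  exact matchF_unique (⟨p, h⟩ : ∃ p, MatchF (Hc x) p k).choose_spec h

open scoped Classical in
lemma qpos_spec {x : ℤ → DA m} {t q : ℤ} (h : MatchF (Hc x) t q) : qpos x t = q := by
  rw [qpos, dif_pos ⟨q, h⟩]
  exact matchF_unique' (⟨q, h⟩ : ∃ q, MatchF (Hc x) t q).choose_spec h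

/-- Invariant for removed sets of positions. -/
def InvR {m : ℕ} (x : ℤ → DA m) (R : Set ℤ) : Prop :=
  ∀ k ∈ R, (∀ j : Fin m, x k = .inr j → ∃ p ∈ R, MatchF (Hc x) p k ∧ Set.Ioo p k ⊆ R) ∧
    (∀ c : Fin m, x k = .inl c → ∃ q ∈ R, MatchF (Hc x) k q ∧ Set.Ioo k q ⊆ R)

lemma key {x : ℤ → DA m} (hx : MatchedSeq x) :
    ∀ (n : ℕ) (L : List ℤ) (R : Set ℤ), L.length ≤ n →
      L.Chain' (fun p q => p < q ∧ Set.Ioo p q ⊆ R) →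
      (∀ a ∈ L, a ∉ R) → InvR x R → GoodW (L.map x) := by
  intro n
  induction n with
  | zero =>
    intro L R hL _ _ _
    have : L = [] := List.length_eq_zero_iff.mp (by omega)
    subst this
    exact ⟨[], [], rfl⟩
  | succ n ih =>
    intro L R hL hchain hdisj hinv
    rcases find_pair (fun t => ∃ c, x t = Sum.inl c) (fun t => ∃ c, x t = Sum.inr c) L with
      ⟨L₁, p, q, L₂, rfl, ⟨c, hc⟩, ⟨j', hj'⟩⟩ | hnp
    swap
    · have hch2 : (L.map x).Chain'
          (fun u v => ¬((∃ c, u = Sum.inl c) ∧ (∃ c, v = Sum.inr c))) := by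
        unfold List.Chain'
        rw [List.isChain_map]
        exact hnp
      obtain ⟨js, ks, he⟩ := shape _ hch2
      rw [he]
      exact good_shape js ks
    · -- the matched pair case
      classical
      obtain ⟨hch1, hch2, hlink0⟩ := List.isChain_append.mp hchain
      have hpq := (List.isChain_cons_cons.mp hch2).1
      have hch3 := (List.isChain_cons_cons.mp hch2).2
      obtain ⟨hqhead, hchL₂⟩ := List.isChain_cons.mp hch3
      have hlink : ∀ a ∈ L₁.getLast?, a < p ∧ Set.Ioo a p ⊆ R := by
        intro a ha
        exact hlink0 a ha p rfl
      have hpqlt : p < q := hpq.1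
      have hIoo : Set.Ioo p q ⊆ R := hpq.2
      have hpL : p ∈ L₁ ++ p :: q :: L₂ := by simp
      have hqL : q ∈ L₁ ++ p :: q :: L₂ := by simp
      have hpR : p ∉ R := hdisj p hpL
      have hqR : q ∉ R := hdisj q hqL
      -- pairwise order facts
      have hlt : (L₁ ++ p :: q :: L₂).Pairwise (· < ·) := by
        rw [← List.isChain_iff_pairwise]
        exact hchain.imp (fun _ _ h => h.1)
      obtain ⟨hpw1, hpw2, hsep⟩ := List.pairwise_append.mp hlt
      have hpb : ∀ b ∈ q :: L₂, p < b := (List.pairwise_cons.mp hpw2).1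
      have hqb : ∀ b ∈ L₂, q < b := (List.pairwise_cons.mp (List.pairwise_cons.mp hpw2).2).1
      -- counting: equal numbers of α's and β's strictly between p and q
      set A := (Finset.Ioo p q).filter (fun t => ∃ cc, x t = Sum.inl cc) with hA
      set B := (Finset.Ioo p q).filter (fun t => ∃ cc, x t = Sum.inr cc) with hB
      have hBtoA : ∀ k ∈ B, mpos x k ∈ A := by
        intro k hk
        obtain ⟨hkIoo, j₂, hj₂⟩ := Finset.mem_filter.mp hk
        rw [Finset.mem_Ioo] at hkIoo
        obtain ⟨p₂, hp₂R, hm₂, hIoo₂⟩ := (hinv k (hIoo (by rw [Set.mem_Ioo]; exact hkIoo))).1 j₂ hj₂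
        rw [mpos_spec hm₂]
        have hp₂lt : p < p₂ := by
          rcases lt_trichotomy p₂ p with h | h | h
          · exact absurd (hIoo₂ ⟨h, hkIoo.1⟩) hpR
          · exact absurd (h ▸ hp₂R) hpR
          · exact h
        obtain ⟨cc, hcc⟩ := match_inl hj₂ hm₂
        exact Finset.mem_filter.mpr ⟨Finset.mem_Ioo.mpr ⟨hp₂lt, lt_trans hm₂.1 hkIoo.2⟩, cc, hcc⟩
      have hAtoB : ∀ t ∈ A, qpos x t ∈ B := by
        intro t ht
        obtain ⟨htIoo, cc, hcc⟩ := Finset.mem_filter.mp ht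
        rw [Finset.mem_Ioo] at htIoo
        obtain ⟨q₂, hq₂R, hm₂, hIoo₂⟩ := (hinv t (hIoo (by rw [Set.mem_Ioo]; exact htIoo))).2 cc hcc
        rw [qpos_spec hm₂]
        have hq₂lt : q₂ < q := by
          rcases lt_trichotomy q₂ q with h | h | h
          · exact h
          · exact absurd (h ▸ hq₂R) hqR
          · exact absurd (hIoo₂ ⟨htIoo.2, h⟩) hqR
        obtain ⟨jj, hjj⟩ := match_inr hcc hm₂
        exact Finset.mem_filter.mpr ⟨Finset.mem_Ioo.mpr ⟨lt_trans htIoo.1 hm₂.1, hq₂lt⟩, jj, hjj⟩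
      have hcard : B.card = A.card := by
        apply Finset.card_bij' (fun k _ => mpos x k) (fun t _ => qpos x t) hBtoA hAtoB
        · intro k hk
          obtain ⟨hkIoo, j₂, hj₂⟩ := Finset.mem_filter.mp hk
          rw [Finset.mem_Ioo] at hkIoo
          obtain ⟨p₂, _, hm₂, _⟩ := (hinv k (hIoo (by rw [Set.mem_Ioo]; exact hkIoo))).1 j₂ hj₂
          rw [mpos_spec hm₂, qpos_spec hm₂]
        · intro t ht
          obtain ⟨htIoo, cc, hcc⟩ := Finset.mem_filter.mp ht
          rw [Finset.mem_Ioo] at htIoo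
          obtain ⟨q₂, _, hm₂, _⟩ := (hinv t (hIoo (by rw [Set.mem_Ioo]; exact htIoo))).2 cc hcc
          rw [qpos_spec hm₂, mpos_spec hm₂]
      have hsum : ∑ t ∈ Finset.Ioo p q, daSgn (x t) = 0 := by
        rw [← Finset.sum_filter_add_sum_filter_not (Finset.Ioo p q)
          (fun t => ∃ cc, x t = Sum.inl cc) (fun t => daSgn (x t))]
        have e1 : ∑ t ∈ A, daSgn (x t) = (A.card : ℤ) := by
          have hone : ∀ t ∈ A, daSgn (x t) = 1 := by
            intro t ht
            obtain ⟨_, cc, hcc⟩ := Finset.mem_filter.mp ht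
            rw [hcc]; rfl
          rw [Finset.sum_congr rfl hone, Finset.sum_const, nsmul_eq_mul, mul_one]
        have eBA : (Finset.Ioo p q).filter (fun t => ¬ ∃ cc, x t = Sum.inl cc) = B := by
          apply Finset.filter_congr
          intro t _
          cases h : x t with
          | inl cc => simp [h]
          | inr cc => simp [h]
        have e2 : ∑ t ∈ (Finset.Ioo p q).filter (fun t => ¬ ∃ cc, x t = Sum.inl cc),
            daSgn (x t) = -(B.card : ℤ) := by
          rw [eBA]
          have hmone : ∀ t ∈ B, daSgn (x t) = -1 := by
            intro t ht
            obtain ⟨_, cc, hcc⟩ := Finset.mem_filter.mp ht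
            rw [hcc]; rfl
          rw [Finset.sum_congr rfl hmone, Finset.sum_const, nsmul_eq_mul]
          ring
        rw [e1, e2, hcard]
        ring
      -- heights
      have hq1 : Hc x q = Hc x (p + 1) := by
        have hIco : Finset.Ico (p + 1) q = Finset.Ioo p q := by
          ext t; simp only [Finset.mem_Ico, Finset.mem_Ioo]; omega
        have := cocycle_sub daSgn x (a := p + 1) (b := q) (by omega)
        rw [hIco] at this
        rw [show Hc x q = cocycle daSgn x q from rfl, this, hsum]
        simp [Hc]
      have hp1 : Hc x (p + 1) = Hc x p + 1 := Hc_step_inl hc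
      have hVq : Hc x (q + 1) = Hc x q - 1 := Hc_step_inr hj'
      have hVp : Hc x p = Hc x (q + 1) := by omega
      -- S2 : no return to level V inside (p, q]
      have hS2 : ∀ t, p < t → t ≤ q → Hc x t ≠ Hc x (q + 1) := by
        by_contra hcon
        push_neg at hcon
        obtain ⟨t₁, ht₁1, ht₁2, ht₁3⟩ := hcon
        obtain ⟨t₀, ⟨ht₀1, ht₀2, ht₀3⟩, hleast⟩ :=
          Int.exists_least_of_bdd (P := fun t => p < t ∧ t ≤ q ∧ Hc x t = Hc x (q + 1))
            ⟨p + 1, fun z hz => by omega⟩ ⟨t₁, ht₁1, ht₁2, ht₁3⟩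
        have ht₀p1 : p + 1 < t₀ := by
          rcases eq_or_lt_of_le (by omega : p + 1 ≤ t₀) with h | h
          · exfalso; rw [← h] at ht₀3; omega
          · exact h
        have hprev : Hc x (t₀ - 1) ≠ Hc x (q + 1) := by
          intro h
          have := hleast (t₀ - 1) ⟨by omega, by omega, h⟩
          omega
        have hstep₀ := Hc_step x (t₀ - 1)
        rw [show t₀ - 1 + 1 = t₀ from by ring] at hstep₀
        rcases daSgn_cases (x (t₀ - 1)) with h1 | h1
        · -- previous height is V - 1 : impossible, earlier crossing
          have hlow : Hc x (t₀ - 1) = Hc x (q + 1) - 1 := by omega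
          obtain ⟨s, hs1, hs2, hs3, _⟩ := exists_crossing (fun t => - Hc x t)
            (by intro t; show - Hc x (t + 1) ≤ - Hc x t + 1; have := Hc_down x t; omega)
            (p + 1) (t₀ - 1) (- Hc x (q + 1))
            (by omega) (by show - Hc x (p + 1) ≤ - Hc x (q + 1); omega)
            (by show - Hc x (q + 1) < - Hc x (t₀ - 1); omega)
          have hs3' : Hc x s = Hc x (q + 1) := by
            have : - Hc x s = - Hc x (q + 1) := hs3
            omega
          have := hleast s ⟨by omega, by omega, hs3'⟩
          omega
        · -- previous letter is a β matched to p : contradiction with p ∉ R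
          obtain ⟨j₂, hj₂⟩ := (daSgn_inr_iff _).mp h1
          have hmt : MatchF (Hc x) p (t₀ - 1) := by
            refine ⟨by omega, ?_, ?_⟩
            · rw [show t₀ - 1 + 1 = t₀ from by ring]; omega
            · intro s hs1 hs2
              rw [show t₀ - 1 + 1 = t₀ from by ring, ht₀3]
              intro hsv
              have := hleast s ⟨hs1, by omega, hsv⟩
              omega
          have hmemR : t₀ - 1 ∈ R := hIoo ⟨by omega, by omega⟩
          obtain ⟨p₂, hp₂R, hm₂, _⟩ := (hinv (t₀ - 1) hmemR).1 j₂ hj₂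
          rw [matchF_unique hm₂ hmt] at hp₂R
          exact hpR hp₂R
      have hmq : MatchF (Hc x) p q := ⟨hpqlt, hVp, hS2⟩
      -- indices agree
      obtain ⟨ρ, hρm, hρl⟩ := hx q j' hj'
      have hρp : ρ = p := matchF_unique hρm hmq
      rw [hρp, hc] at hρl
      have hcj : c = j' := Sum.inl.inj hρl
      subst hcj
      -- apply the induction hypothesis to L₁ ++ L₂ with R' = insert p (insert q R)
      set R' := insert p (insert q R) with hR'
      have hRsub : R ⊆ R' := fun t ht => Set.mem_insert_iff.mpr
        (Or.inr (Set.mem_insert_iff.mpr (Or.inr ht)))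
      have hchain' : (L₁ ++ L₂).Chain' (fun u v => u < v ∧ Set.Ioo u v ⊆ R') := by
        unfold List.Chain'
        rw [List.isChain_append]
        refine ⟨hch1.imp (fun _ _ h => ⟨h.1, fun t ht => hRsub (h.2 ht)⟩),
          hchL₂.imp (fun _ _ h => ⟨h.1, fun t ht => hRsub (h.2 ht)⟩), ?_⟩
        intro a ha b hb
        have h1 := hlink a ha
        have h2 := hqhead b hb
        refine ⟨by omega, ?_⟩
        intro t ht
        rw [Set.mem_Ioo] at ht
        rcases lt_trichotomy t p with h | h | h
        · exact hRsub (h1.2 ⟨ht.1, h⟩)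
        · exact h ▸ Set.mem_insert p _
        · rcases lt_trichotomy t q with h' | h' | h'
          · exact hRsub (hIoo ⟨h, h'⟩)
          · rw [h']
            exact Set.mem_insert_iff.mpr (Or.inr (Set.mem_insert q R))
          · exact hRsub (h2.2 ⟨h', ht.2⟩)
      have hdisj' : ∀ a ∈ L₁ ++ L₂, a ∉ R' := by
        intro a ha
        have haL : a ∈ L₁ ++ p :: q :: L₂ := by
          rcases List.mem_append.mp ha with h | h
          · exact List.mem_append.mpr (Or.inl h)
          · exact List.mem_append.mpr (Or.inr (by simp [h]))
        have hanotR := hdisj a haL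
        have hap : a ≠ p := by
          rcases List.mem_append.mp ha with h | h
          · exact ne_of_lt (hsep a h p (by simp))
          · exact ne_of_gt (lt_trans hpqlt (hqb a h))
        have haq : a ≠ q := by
          rcases List.mem_append.mp ha with h | h
          · exact ne_of_lt (hsep a h q (by simp))
          · exact ne_of_gt (hqb a h)
        rw [hR']
        simp only [Set.mem_insert_iff]
        rintro (rfl | rfl | h)
        · exact hap rfl
        · exact haq rfl
        · exact hanotR h
      have hqR' : q ∈ R' := Set.mem_insert_iff.mpr (Or.inr (Set.mem_insert q R))
      have hpR' : p ∈ R' := Set.mem_insert p _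
      have hinv' : InvR x R' := by
        intro k hk
        rcases Set.mem_insert_iff.mp hk with rfl | hk2
        · constructor
          · intro j hj
            rw [hc] at hj
            exact absurd hj (by simp)
          · intro c' _
            exact ⟨q, hqR', hmq, fun t ht => hRsub (hIoo ht)⟩
        rcases Set.mem_insert_iff.mp hk2 with rfl | hk3
        · constructor
          · intro j _
            exact ⟨p, hpR', hmq, fun t ht => hRsub (hIoo ht)⟩
          · intro c' hc'
            rw [hj'] at hc'
            exact absurd hc' (by simp)
        · obtain ⟨h1, h2⟩ := hinv k hk3
          constructor
          · intro j hj
            obtain ⟨p₂, hp₂, hm₂, hI₂⟩ := h1 j hj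
            exact ⟨p₂, hRsub hp₂, hm₂, fun t ht => hRsub (hI₂ ht)⟩
          · intro c' hc'
            obtain ⟨q₂, hq₂, hm₂, hI₂⟩ := h2 c' hc'
            exact ⟨q₂, hRsub hq₂, hm₂, fun t ht => hRsub (hI₂ ht)⟩
      have hlen' : (L₁ ++ L₂).length ≤ n := by
        simp only [List.length_append, List.length_cons] at hL ⊢
        omega
      have hgood := ih (L₁ ++ L₂) R' hlen' hchain' hdisj' hinv'
      have hmap : (L₁ ++ p :: q :: L₂).map x
          = L₁.map x ++ [Sum.inl c, Sum.inr c] ++ L₂.map x := by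
        simp [hc, hj']
      rw [hmap]
      apply good_cancel c
      rw [← List.map_append]
      exact hgood
end Key

section Transfer
variable {m : ℕ}

lemma inDyckShift_of_matched {x : ℤ → DA m} (hx : MatchedSeq x) : InDyckShift x := by
  intro a b _
  rw [wordOf_eq]
  apply isNonzero_of_good
  apply key hx ((b + 1 - a).toNat) _ ∅ (le_of_eq (posList_length _ _))
  · apply posList_chain'
    intro t
    refine ⟨by omega, ?_⟩
    intro s hs
    rw [Set.mem_Ioo] at hs
    exact absurd hs (by omega)
  · intro a' _
    exact Set.notMem_empty a'
  · intro k hk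
    exact absurd hk (Set.notMem_empty k)

lemma cocycle_congr {γ δ : Type*} (s : γ → ℤ) (s' : δ → ℤ) (x : ℤ → γ) (y : ℤ → δ)
    (h : ∀ n, s (x n) = s' (y n)) : ∀ i, cocycle s x i = cocycle s' y i := by
  intro i
  by_cases h0 : (0 : ℤ) ≤ i
  · rw [cocycle, cocycle, if_pos h0, if_pos h0]
    exact Finset.sum_congr rfl (fun j _ => h _)
  · rw [cocycle, cocycle, if_neg h0, if_neg h0]
    congr 1
    exact Finset.sum_congr rfl (fun j _ => h _)

lemma collapse_sgn (x : ℤ → DA m) (n : ℤ) : oSgn (collapse x n) = daSgn (x n) := by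
  cases h : x n <;> simp [collapse, oSgn, daSgn, h]

lemma collapse_cocycle (x : ℤ → DA m) (i : ℤ) : cocycle oSgn (collapse x) i = Hc x i :=
  cocycle_congr _ _ _ _ (fun n => collapse_sgn x n) i

lemma collapse_eq_inl {x : ℤ → DA m} {k : ℤ} {c : Fin m} :
    collapse x k = Sum.inl c ↔ x k = Sum.inl c := by
  cases h : x k <;> simp [collapse, h]

lemma collapse_mem {x : ℤ → DA m} (hx : x ∈ Bpm m) : collapse x ∈ OmegaPm m := by
  obtain ⟨_, htop, hbot⟩ := hx
  have he : (fun n : ℤ => ((cocycle oSgn (collapse x) n : ℝ) : EReal))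
      = fun n : ℤ => ((Hc x n : ℝ) : EReal) := by
    funext n
    rw [collapse_cocycle]
  exact ⟨by rw [he]; exact htop, by rw [he]; exact hbot⟩

lemma collapse_injOn : Set.InjOn (collapse (m := m)) (Bpm m) := by
  intro x hx y hy he
  funext k
  have hsgn : ∀ n, daSgn (x n) = daSgn (y n) := by
    intro n
    rw [← collapse_sgn, ← collapse_sgn, he]
  have hH : Hc x = Hc y := funext (cocycle_congr daSgn daSgn x y hsgn)
  have hcol : ∀ n, collapse x n = collapse y n := fun n => by rw [he]
  cases hxk : x k with
  | inl c =>
    have h1 : collapse y k = Sum.inl c := by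
      rw [← hcol k]
      exact collapse_eq_inl.mpr hxk
    rw [collapse_eq_inl.mp h1]
  | inr j =>
    have hyk' : daSgn (y k) = -1 := by
      rw [← hsgn k, hxk]; rfl
    obtain ⟨j₂, hyk⟩ := (daSgn_inr_iff _).mp hyk'
    obtain ⟨p, hpm, hpl⟩ := matched_of_mem hx k j hxk
    obtain ⟨p₂, hp₂m, hp₂l⟩ := matched_of_mem hy k j₂ hyk
    rw [hH] at hpm
    have hpp : p₂ = p := matchF_unique hp₂m hpm
    rw [hpp] at hp₂l
    have h2 : collapse y p = Sum.inl j₂ := collapse_eq_inl.mpr hp₂l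
    rw [← hcol p] at h2
    have h3 : j = j₂ := by
      have := collapse_eq_inl.mp h2
      rw [hpl] at this
      exact Sum.inl.inj this
    rw [hyk, h3]

end Transfer

section Build
variable {m : ℕ}

open scoped Classical in
/-- Inverse of `collapse`: reconstruct the index of each closing bracket from the
height-matching opening bracket. -/
noncomputable def build (d : Fin m) (ω : ℤ → OA m) : ℤ → DA m := fun k =>
  match ω k with
  | .inl j => .inl j
  | .inr _ => .inr (if h : ∃ p c, MatchF (cocycle oSgn ω) p k ∧ ω p = .inl c
      then h.choose_spec.choose else d)

open scoped Classical in
lemma build_inl {d : Fin m} {ω : ℤ → OA m} {k : ℤ} {j : Fin m} (h : ω k = .inl j) :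
    build d ω k = .inl j := by
  simp [build, h]

open scoped Classical in
lemma build_sgn (d : Fin m) (ω : ℤ → OA m) (n : ℤ) : daSgn (build d ω n) = oSgn (ω n) := by
  cases h : ω n <;> simp [build, h, daSgn, oSgn]

lemma build_cocycle (d : Fin m) (ω : ℤ → OA m) : Hc (build d ω) = cocycle oSgn ω :=
  funext (cocycle_congr daSgn oSgn (build d ω) ω (fun n => build_sgn d ω n))

open scoped Classical in
lemma collapse_build (d : Fin m) (ω : ℤ → OA m) : collapse (build d ω) = ω := by
  funext k
  cases h : ω k with
  | inl j => simp [collapse, build, h]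
  | inr u => cases u; simp [collapse, build, h]

open scoped Classical in
lemma build_matched {ω : ℤ → OA m} (hω : ω ∈ OmegaPm m) (d : Fin m) :
    MatchedSeq (build d ω) := by
  set x := build d ω with hxdef
  intro k j hk
  cases hωk : ω k with
  | inl j₂ =>
    rw [hxdef, build_inl hωk] at hk
    exact absurd hk (by simp)
  | inr u =>
    have hbot : Filter.liminf (fun n : ℤ => ((Hc x n : ℝ) : EReal)) Filter.atBot = ⊥ := by
      have he : (fun n : ℤ => ((Hc x n : ℝ) : EReal))
          = fun n : ℤ => ((cocycle oSgn ω n : ℝ) : EReal) := by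
        funext n
        rw [hxdef, build_cocycle]
      rw [he]
      exact hω.2
    have hxk : daSgn (x k) = -1 := by
      rw [hxdef, build_sgn, hωk]; rfl
    obtain ⟨jj, hjj⟩ := (daSgn_inr_iff _).mp hxk
    have hV : Hc x (k + 1) = Hc x k - 1 := Hc_step_inr hjj
    obtain ⟨p', hp'k, hp'⟩ := exists_le_of_liminf_bot hbot (Hc x (k + 1)) k
    obtain ⟨p, hpa, hpk, hpV, habove⟩ := exists_crossing (Hc x) (Hc_up x) p' k (Hc x (k + 1))
      hp'k (le_of_lt hp') (by omega)
    have hmatch : MatchF (Hc x) p k := ⟨hpk, hpV, fun q h1 h2 => (habove q h1 h2).ne'⟩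
    obtain ⟨c, hpc⟩ := match_inl hjj hmatch
    have hωp : ω p = .inl c := by
      have := collapse_build d ω
      rw [← this]
      exact collapse_eq_inl.mpr hpc
    have hex : ∃ p₀ c₀, MatchF (cocycle oSgn ω) p₀ k ∧ ω p₀ = .inl c₀ := by
      refine ⟨p, c, ?_, hωp⟩
      rw [← build_cocycle d ω]
      exact hmatch
    -- compute the stored index
    have hxk2 : x k = Sum.inr (hex.choose_spec.choose) := by
      rw [hxdef]
      show build d ω k = _
      simp only [build, hωk]
      rw [dif_pos hex]
    have hgen : ∀ (p₀ : ℤ) (c₀ : Fin m), MatchF (cocycle oSgn ω) p₀ k → ω p₀ = .inl c₀ →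
        c₀ = c := by
      intro p₀ c₀ hm₀ hl₀
      have hm₀' : MatchF (Hc x) p₀ k := by
        rw [hxdef, build_cocycle d ω]
        exact hm₀
      have hpp : p₀ = p := matchF_unique hm₀' hmatch
      rw [hpp, hωp] at hl₀
      exact (Sum.inl.inj hl₀).symm
    have hcc : hex.choose_spec.choose = c :=
      hgen _ _ hex.choose_spec.choose_spec.1 hex.choose_spec.choose_spec.2
    have hjc : j = c := by
      rw [hk] at hxk2
      rw [← hcc]
      exact Sum.inr.inj hxk2
    exact ⟨p, hmatch, by rw [hpc, hjc]⟩

lemma build_mem {ω : ℤ → OA m} (hω : ω ∈ OmegaPm m) (d : Fin m) : build d ω ∈ Bpm m := by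
  have he : (fun n : ℤ => ((Hc (build d ω) n : ℝ) : EReal))
      = fun n : ℤ => ((cocycle oSgn ω n : ℝ) : EReal) := by
    funext n
    rw [build_cocycle]
  exact ⟨inDyckShift_of_matched (build_matched hω d),
    by rw [he]; exact hω.1, by rw [he]; exact hω.2⟩

end Build

section Tail
variable {m : ℕ}

lemma doubleTail_of_collapse {x y : ℤ → DA m} (hx : x ∈ Bpm m) (hy : y ∈ Bpm m)
    (h : DoubleTail (collapse x) (collapse y)) : DoubleTail x y := by
  obtain ⟨n, hn⟩ := h
  set n₁ : ℤ := max n 0 with hn₁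
  have hcol : ∀ k, n < |k| → collapse x k = collapse y k := hn
  have hsgn : ∀ k, n < |k| → daSgn (x k) = daSgn (y k) := by
    intro k hk
    rw [← collapse_sgn, ← collapse_sgn, hcol k hk]
  have posdiff : ∀ p t, n₁ < p → p ≤ t → Hc x t - Hc x p = Hc y t - Hc y p := by
    intro p t hp hpt
    have h1 : Hc x t = Hc x p + ∑ s ∈ Finset.Ico p t, daSgn (x s) := cocycle_sub daSgn x hpt
    have h2 : Hc y t = Hc y p + ∑ s ∈ Finset.Ico p t, daSgn (y s) := cocycle_sub daSgn y hpt
    have h3 : ∑ s ∈ Finset.Ico p t, daSgn (x s) = ∑ s ∈ Finset.Ico p t, daSgn (y s) := by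
      apply Finset.sum_congr rfl
      intro s hs
      rw [Finset.mem_Ico] at hs
      apply hsgn s
      have habs : |s| = s := abs_of_pos (by omega)
      omega
    omega
  have negdiff : ∀ p t, p ≤ t → t ≤ -n₁ - 1 → Hc x t - Hc x p = Hc y t - Hc y p := by
    intro p t hpt ht
    have h1 : Hc x t = Hc x p + ∑ s ∈ Finset.Ico p t, daSgn (x s) := cocycle_sub daSgn x hpt
    have h2 : Hc y t = Hc y p + ∑ s ∈ Finset.Ico p t, daSgn (y s) := cocycle_sub daSgn y hpt
    have h3 : ∑ s ∈ Finset.Ico p t, daSgn (x s) = ∑ s ∈ Finset.Ico p t, daSgn (y s) := by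
      apply Finset.sum_congr rfl
      intro s hs
      rw [Finset.mem_Ico] at hs
      apply hsgn s
      have habs : |s| = -s := abs_of_neg (by omega)
      omega
    omega
  obtain ⟨N₀, hN₀⟩ := exists_forall_gt_of_liminf_top hx.2.1 (Hc x (n₁ + 1))
  set N : ℤ := max N₀ (n₁ + 2) with hN
  have hpos : ∀ k, N ≤ k → x k = y k := by
    intro k hk
    have habs : n < |k| := by
      have h0 : |k| = k := abs_of_pos (by omega)
      omega
    cases hxk : x k with
    | inl c =>
      have h1 : collapse y k = Sum.inl c := by
        rw [← hcol k habs]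
        exact collapse_eq_inl.mpr hxk
      rw [collapse_eq_inl.mp h1]
    | inr j =>
      have hyk' : daSgn (y k) = -1 := by rw [← hsgn k habs, hxk]; rfl
      obtain ⟨j₂, hyk⟩ := (daSgn_inr_iff _).mp hyk'
      obtain ⟨p, hpm, hpl⟩ := matched_of_mem hx k j hxk
      have hV : Hc x (k + 1) = Hc x k - 1 := Hc_step_inr hxk
      have hup : Hc x (n₁ + 1) < Hc x (k + 1) := hN₀ (k + 1) (by omega)
      obtain ⟨ph, hph1, hph2, hph3, hab⟩ := exists_crossing (Hc x) (Hc_up x) (n₁ + 1) k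
        (Hc x (k + 1)) (by omega) (le_of_lt hup) (by omega)
      have hmh : MatchF (Hc x) ph k := ⟨hph2, hph3, fun q h1 h2 => (hab q h1 h2).ne'⟩
      have hpph : p = ph := matchF_unique hpm hmh
      have hpgt : n₁ < p := by omega
      have hmy : MatchF (Hc y) p k := by
        refine ⟨hpm.1, ?_, ?_⟩
        · have hd1 := posdiff p (k + 1) hpgt (by have := hpm.1; omega)
          have h21 := hpm.2.1
          omega
        · intro q h1 h2
          have hd1 := posdiff p q hpgt (by omega)
          have hd2 := posdiff p (k + 1) hpgt (by have := hpm.1; omega)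
          have h22 := hpm.2.2 q h1 h2
          omega
      obtain ⟨p₂, hp₂m, hp₂l⟩ := matched_of_mem hy k j₂ hyk
      have hp₂p : p₂ = p := matchF_unique hp₂m hmy
      rw [hp₂p] at hp₂l
      have habs2 : n < |p| := by
        have h0 : |p| = p := abs_of_pos (by omega)
        omega
      have h2 : collapse x p = Sum.inl j₂ := by
        rw [hcol p habs2]
        exact collapse_eq_inl.mpr hp₂l
      have h3 : j = j₂ := by
        have h4 := collapse_eq_inl.mp h2
        rw [hpl] at h4
        exact Sum.inl.inj h4
      rw [hyk, h3]
  have hneg : ∀ k, k ≤ -(n₁ + 2) → x k = y k := by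
    intro k hk
    have habs : n < |k| := by
      have h0 : |k| = -k := abs_of_neg (by omega)
      omega
    cases hxk : x k with
    | inl c =>
      have h1 : collapse y k = Sum.inl c := by
        rw [← hcol k habs]
        exact collapse_eq_inl.mpr hxk
      rw [collapse_eq_inl.mp h1]
    | inr j =>
      have hyk' : daSgn (y k) = -1 := by rw [← hsgn k habs, hxk]; rfl
      obtain ⟨j₂, hyk⟩ := (daSgn_inr_iff _).mp hyk'
      obtain ⟨p, hpm, hpl⟩ := matched_of_mem hx k j hxk
      have hmy : MatchF (Hc y) p k := by
        refine ⟨hpm.1, ?_, ?_⟩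
        · have hd1 := negdiff p (k + 1) (by have := hpm.1; omega) (by omega)
          have h21 := hpm.2.1
          omega
        · intro q h1 h2
          have hd1 := negdiff p q (by omega) (by omega)
          have hd2 := negdiff p (k + 1) (by have := hpm.1; omega) (by omega)
          have h22 := hpm.2.2 q h1 h2
          omega
      obtain ⟨p₂, hp₂m, hp₂l⟩ := matched_of_mem hy k j₂ hyk
      have hp₂p : p₂ = p := matchF_unique hp₂m hmy
      rw [hp₂p] at hp₂l
      have habs2 : n < |p| := by
        have h0 : |p| = -p := abs_of_neg (by have := hpm.1; omega)
        have := hpm.1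
        omega
      have h2 : collapse x p = Sum.inl j₂ := by
        rw [hcol p habs2]
        exact collapse_eq_inl.mpr hp₂l
      have h3 : j = j₂ := by
        have h4 := collapse_eq_inl.mp h2
        rw [hpl] at h4
        exact Sum.inl.inj h4
      rw [hyk, h3]
  refine ⟨max N (n₁ + 2), ?_⟩
  intro k hk
  rcases le_or_gt 0 k with h0 | h0
  · have h1 : |k| = k := abs_of_nonneg h0
    exact hpos k (by omega)
  · have h1 : |k| = -k := abs_of_neg h0
    exact hneg k (by omega)

end Tail



/-- `g₊` is a bijection of `B^{+∞}_{-∞}` onto `Ω^{+∞}_{-∞}` carrying the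
double-tail relation of `B^{+∞}_{-∞}` exactly onto that of `Ω^{+∞}_{-∞}`:
`(g₊ × g₊)(𝒯₂(B^{+∞}_{-∞})) = 𝒯₂(Ω^{+∞}_{-∞})`. -/
theorem collapse_bijOn_and_tail_iso (m : ℕ) (hm : 2 ≤ m) :
    Set.BijOn (collapse (m := m)) (Bpm m) (OmegaPm m) ∧
      ∀ x ∈ Bpm m, ∀ y ∈ Bpm m,
        (DoubleTail x y ↔ DoubleTail (collapse x) (collapse y)) := by
  have hd : Fin m := ⟨0, by omega⟩
  refine ⟨⟨fun x hx => collapse_mem hx, collapse_injOn, ?_⟩, ?_⟩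
  · intro ω hω
    exact ⟨build hd ω, build_mem hω hd, collapse_build hd ω⟩
  · intro x hx y hy
    constructor
    · rintro ⟨n, hn⟩
      exact ⟨n, fun k hk => by rw [collapse, collapse, hn k hk]⟩
    · exact doubleTail_of_collapse hx hy
end ConLemmas
end
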